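/- arXiv:2305.12216 — 2 statements merged into one kernel-verified Lean document; each statement's English description precedes it below -/
import Mathlib

section
/- Let E = EuclideanSpace ℝ (Fin d), J : E → ℝ differentiable with L̂-Lipschitz gradient (L̂ ≥ 0), λ > L̂, and V(w) = sup_{θ ∈ E} [J(θ) − (λ/2)‖θ − w‖²]. Then the gradient of V is Lipschitz with constant λL̂/(λ − L̂): for all w, v ∈ E, ‖∇V(w) − ∇V(v)‖ ≤ (λL̂/(λ − L̂))‖w − v‖. In particular, if λ ≥ κL̂ for some κ > 1, then ∇V is (λ/(κ − 1))-Lipschitz. -/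
/-!
The maximizer `θ̂(w)` exists because, by the descent lemma, the objective
`θ ↦ J θ - λ/2 ‖θ - w‖²` lies below a concave quadratic with leading coefficient `-(λ - L̂)/2`;
at the maximizer `∇J(θ̂(w)) = λ(θ̂(w) - w)`. Subtracting these identities at `w` and `v` gives
`(λ - L̂)‖θ̂(w) - θ̂(v)‖ ≤ λ‖w - v‖`, so the slope `g(w) = λ(θ̂(w) - w) = ∇J(θ̂(w))` is
`λL̂/(λ - L̂)`-Lipschitz. Evaluating the supremum defining `V u` at `θ̂(w)` shows that
`V(w) + ⟪g(w), u - w⟫ - λ/2 ‖u - w‖²` minorizes `V`, and a function with quadratic minorants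
whose slopes vary in a Lipschitz way is differentiable with gradient `g`.
-/

open RealInnerProductSpace Filter Topology Asymptotics Set

section InnerProductSpace

variable {F : Type*} [NormedAddCommGroup F] [InnerProductSpace ℝ F]

theorem moreauEnvelope_quadratic_minorant {J V : F → ℝ} {T : F → F} {lam : ℝ}
    (hV : ∀ w, V w = ⨆ θ, (J θ - lam / 2 * ‖θ - w‖ ^ 2))
    (hT : ∀ w θ, J θ - lam / 2 * ‖θ - w‖ ^ 2 ≤ J (T w) - lam / 2 * ‖T w - w‖ ^ 2) (w u : F) :
    V w + ⟪lam • (T w - w), u - w⟫ - lam / 2 * ‖u - w‖ ^ 2 ≤ V u := by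
  have hVw : V w = J (T w) - lam / 2 * ‖T w - w‖ ^ 2 :=
    (hV w).trans (ciSup_eq_of_forall_le_of_forall_lt_exists_gt (hT w) fun _ hr => ⟨T w, hr⟩)
  have hpolar : ‖T w - u‖ ^ 2 = ‖T w - w‖ ^ 2 - 2 * ⟪T w - w, u - w⟫ + ‖u - w‖ ^ 2 := by
    rw [← norm_sub_sq_real, sub_sub_sub_cancel_right]
  calc V w + ⟪lam • (T w - w), u - w⟫ - lam / 2 * ‖u - w‖ ^ 2
      = J (T w) - lam / 2 * ‖T w - u‖ ^ 2 := by rw [hVw, hpolar, real_inner_smul_left]; ring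
    _ ≤ V u := hV u ▸ le_ciSup ⟨_, forall_mem_range.2 (hT u)⟩ (T w)

variable [CompleteSpace F]

theorem hasGradientAt_of_isBigO_sq {f : F → ℝ} {g a : F}
    (h : (fun u => f u - f a - ⟪g, u - a⟫) =O[𝓝 a] fun u => ‖u - a‖ ^ 2) :
    HasGradientAt f g a :=
  hasGradientAt_iff_isLittleO.2 <| h.trans_isLittleO <|
    (isLittleO_norm_pow_id one_lt_two).comp_tendsto (tendsto_sub_nhds_zero_iff.2 tendsto_id)

theorem hasGradientAt_of_forall_quadratic_minorant {f : F → ℝ} {g : F → F} {c M : ℝ}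
    (hg : ∀ u v, ‖g u - g v‖ ≤ M * ‖u - v‖)
    (hf : ∀ v u, f v + ⟪g v, u - v⟫ - c * ‖u - v‖ ^ 2 ≤ f u) (a : F) :
    HasGradientAt f (g a) a := by
  refine hasGradientAt_of_isBigO_sq (.of_bound (|M| + |c|) (.of_forall fun u => ?_))
  have hslope : ⟪g u - g a, u - a⟫ ≤ M * ‖u - a‖ ^ 2 := calc
    _ ≤ ‖g u - g a‖ * ‖u - a‖ := real_inner_le_norm _ _
    _ ≤ M * ‖u - a‖ * ‖u - a‖ := by gcongr; exact hg u a
    _ = M * ‖u - a‖ ^ 2 := by ring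
  have hlow := hf a u
  -- the minorant based at `u`, read at `a`, bounds the remainder from above
  have hupp := hf u a
  rw [norm_sub_rev a u, ← neg_sub u a, inner_neg_right] at hupp
  rw [inner_sub_left] at hslope
  rw [Real.norm_eq_abs, norm_pow, norm_norm, abs_le]
  have hc : c * ‖u - a‖ ^ 2 ≤ (|M| + |c|) * ‖u - a‖ ^ 2 :=
    mul_le_mul_of_nonneg_right (by linarith [abs_nonneg M, le_abs_self c]) (sq_nonneg _)
  have hMc : (M + c) * ‖u - a‖ ^ 2 ≤ (|M| + |c|) * ‖u - a‖ ^ 2 :=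
    mul_le_mul_of_nonneg_right (by linarith [le_abs_self M, le_abs_self c]) (sq_nonneg _)
  constructor <;> linarith

theorem abs_sub_sub_inner_gradient_le {J : F → ℝ} {L : ℝ} (hJ : Differentiable ℝ J)
    (hLip : ∀ x y, ‖gradient J x - gradient J y‖ ≤ L * ‖x - y‖) (x y : F) :
    |J y - J x - ⟪gradient J x, y - x⟫| ≤ L / 2 * ‖y - x‖ ^ 2 := by
  set z := y - x
  let f : ℝ → ℝ := fun t => J (x + t • z) - J x - t * ⟪gradient J x, z⟫
  have hf : ∀ t, HasDerivAt f ⟪gradient J (x + t • z) - gradient J x, z⟫ t := by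
    intro t
    have hline : HasDerivAt (fun s : ℝ => x + s • z) z t := by
      simpa using ((hasDerivAt_id t).smul_const z).const_add x
    have := (((hJ _).hasGradientAt.hasFDerivAt.comp_hasDerivAt t hline).sub_const (J x)).sub
      ((hasDerivAt_id t).mul_const ⟪gradient J x, z⟫)
    exact this.congr_deriv (by simp [inner_sub_left])
  have hB : ∀ t, HasDerivAt (fun t => L / 2 * ‖z‖ ^ 2 * t ^ 2) (L * ‖z‖ ^ 2 * t) t := fun t =>
    ((hasDerivAt_pow 2 t).const_mul _).congr_deriv (by push_cast; ring)
  have bound : ∀ t ∈ Ico (0 : ℝ) 1,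
      ‖⟪gradient J (x + t • z) - gradient J x, z⟫‖ ≤ L * ‖z‖ ^ 2 * t := by
    intro t ht
    calc _ ≤ ‖gradient J (x + t • z) - gradient J x‖ * ‖z‖ := norm_inner_le_norm _ _
      _ ≤ L * ‖t • z‖ * ‖z‖ := by gcongr; simpa using hLip (x + t • z) x
      _ = L * ‖z‖ ^ 2 * t := by rw [norm_smul, Real.norm_of_nonneg ht.1]; ring
  have := image_norm_le_of_norm_deriv_right_le_deriv_boundary
    (fun t _ => (hf t).continuousAt.continuousWithinAt) (fun t _ => (hf t).hasDerivWithinAt)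
    (by simp [f]) hB bound (right_mem_Icc.2 zero_le_one)
  simpa [f, z] using this

theorem exists_forall_sub_sq_norm_le [ProperSpace F] {J : F → ℝ} {L lam : ℝ}
    (hJ : Differentiable ℝ J) (hLip : ∀ x y, ‖gradient J x - gradient J y‖ ≤ L * ‖x - y‖)
    (hlam : L < lam) (w : F) : ∃ a, ∀ θ, J θ - lam / 2 * ‖θ - w‖ ^ 2 ≤ J a - lam / 2 * ‖a - w‖ ^ 2 := by
  have hcont : Continuous fun θ => J θ - lam / 2 * ‖θ - w‖ ^ 2 := by
    have := hJ.continuous; fun_prop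
  have hub : ∀ θ, J θ - lam / 2 * ‖θ - w‖ ^ 2
      ≤ J w + ‖gradient J w‖ * ‖θ - w‖ - (lam - L) / 2 * ‖θ - w‖ ^ 2 := by
    intro θ
    have hdescent := (abs_le.1 (abs_sub_sub_inner_gradient_le hJ hLip w θ)).2
    nlinarith [real_inner_le_norm (gradient J w) (θ - w)]
  have hquad : Tendsto (fun r => J w + ‖gradient J w‖ * r - (lam - L) / 2 * r ^ 2) atTop atBot := by
    have hc : 0 < (lam - L) / 2 := by linarith
    have h : Tendsto (fun r => r * (‖gradient J w‖ - (lam - L) / 2 * r)) atTop atBot :=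
      tendsto_id.atTop_mul_atBot₀ (tendsto_atBot_add_const_left _ ‖gradient J w‖
        (tendsto_neg_atTop_atBot.comp (tendsto_id.const_mul_atTop hc)))
    exact (tendsto_atBot_add_const_left _ (J w) h).congr fun r => by ring
  have hdist : Tendsto (fun θ => ‖θ - w‖) (cocompact F) atTop := by
    simpa [dist_eq_norm] using tendsto_dist_right_cocompact_atTop w
  exact hcont.exists_forall_ge (tendsto_atBot_mono hub (hquad.comp hdist))

theorem gradient_eq_smul_sub_of_forall_le {J : F → ℝ} {lam : ℝ} {w a : F}
    (hJ : DifferentiableAt ℝ J a)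
    (ha : ∀ θ, J θ - lam / 2 * ‖θ - w‖ ^ 2 ≤ J a - lam / 2 * ‖a - w‖ ^ 2) :
    gradient J a = lam • (a - w) := by
  have hderiv := hJ.hasGradientAt.hasFDerivAt.sub
    (((hasFDerivAt_id a).sub_const w).norm_sq.const_mul (lam / 2))
  have h0 := congr($(IsLocalMax.hasFDerivAt_eq_zero (.of_forall ha) hderiv)
    (gradient J a - lam • (a - w)))
  simp only [sub_apply, smul_apply, two_smul, add_apply, ContinuousLinearMap.comp_apply,
    ContinuousLinearMap.id_apply, InnerProductSpace.toDual_apply_apply, innerSL_apply_apply,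
    id_eq, zero_apply, smul_eq_mul] at h0
  rw [← sub_eq_zero, ← inner_self_eq_zero (𝕜 := ℝ), inner_sub_left _ (lam • (a - w)),
    real_inner_smul_left]
  linarith

theorem norm_sub_le_of_gradient_eq_smul_sub {J : F → ℝ} {L lam : ℝ} (hL : 0 ≤ L)
    (hlam : L < lam) (hLip : ∀ x y, ‖gradient J x - gradient J y‖ ≤ L * ‖x - y‖) {a b w v : F}
    (ha : gradient J a = lam • (a - w)) (hb : gradient J b = lam • (b - v)) :
    ‖a - b‖ ≤ lam / (lam - L) * ‖w - v‖ := by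
  have hlam0 : 0 ≤ lam := hL.trans hlam.le
  have hsplit : lam • (a - b) = lam • (w - v) + (gradient J a - gradient J b) := by
    rw [ha, hb]; module
  have : lam * ‖a - b‖ ≤ lam * ‖w - v‖ + L * ‖a - b‖ := calc
    lam * ‖a - b‖ = ‖lam • (w - v) + (gradient J a - gradient J b)‖ := by
      rw [← hsplit, norm_smul, Real.norm_of_nonneg hlam0]
    _ ≤ ‖lam • (w - v)‖ + ‖gradient J a - gradient J b‖ := norm_add_le _ _
    _ ≤ lam * ‖w - v‖ + L * ‖a - b‖ := by
      rw [norm_smul, Real.norm_of_nonneg hlam0]; gcongr; exact hLip a b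
  rw [div_mul_eq_mul_div, le_div_iff₀ (sub_pos.2 hlam)]
  linarith

end InnerProductSpace

theorem moreau_envelope_gradient_lipschitz_general
    (d : ℕ)
    (J : EuclideanSpace ℝ (Fin d) → ℝ) (Lhat lam : ℝ)
    (hLhat : 0 ≤ Lhat) (hJ : Differentiable ℝ J)
    (hLip : ∀ x y, ‖gradient J x - gradient J y‖ ≤ Lhat * ‖x - y‖)
    (hlam : Lhat < lam)
    (V : EuclideanSpace ℝ (Fin d) → ℝ)
    (hV : ∀ w, V w = ⨆ θ : EuclideanSpace ℝ (Fin d), (J θ - lam / 2 * ‖θ - w‖ ^ 2)) :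
    (∀ w v : EuclideanSpace ℝ (Fin d),
      ‖gradient V w - gradient V v‖ ≤ lam * Lhat / (lam - Lhat) * ‖w - v‖) ∧
    (∀ κ : ℝ, 1 < κ → κ * Lhat ≤ lam →
      ∀ w v : EuclideanSpace ℝ (Fin d),
        ‖gradient V w - gradient V v‖ ≤ lam / (κ - 1) * ‖w - v‖) := by
  choose T hTmax using exists_forall_sub_sq_norm_le hJ hLip hlam
  have hTgrad w : gradient J (T w) = lam • (T w - w) :=
    gradient_eq_smul_sub_of_forall_le (hJ _) (hTmax w)
  have hslope w v : ‖lam • (T w - w) - lam • (T v - v)‖ ≤ lam * Lhat / (lam - Lhat) * ‖w - v‖ :=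
    calc ‖lam • (T w - w) - lam • (T v - v)‖ = ‖gradient J (T w) - gradient J (T v)‖ := by
          rw [hTgrad, hTgrad]
      _ ≤ Lhat * ‖T w - T v‖ := hLip _ _
      _ ≤ Lhat * (lam / (lam - Lhat) * ‖w - v‖) := by
          gcongr; exact norm_sub_le_of_gradient_eq_smul_sub hLhat hlam hLip (hTgrad w) (hTgrad v)
      _ = lam * Lhat / (lam - Lhat) * ‖w - v‖ := by ring
  have hgradV w : gradient V w = lam • (T w - w) :=
    (hasGradientAt_of_forall_quadratic_minorant hslope
      (moreauEnvelope_quadratic_minorant hV hTmax) w).gradient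
  have hLipV : ∀ w v, ‖gradient V w - gradient V v‖ ≤ lam * Lhat / (lam - Lhat) * ‖w - v‖ := by
    simpa only [hgradV] using hslope
  refine ⟨hLipV, fun κ hκ hκlam w v => (hLipV w v).trans ?_⟩
  gcongr ?_ * _
  rw [div_le_div_iff₀ (sub_pos.2 hlam) (sub_pos.2 hκ)]
  nlinarith

/-- Smoothness of the Moreau-envelope value: `∇V` is `λL̂/(λ − L̂)`-Lipschitz;
in particular, if `λ ≥ κL̂` with `κ > 1`, then `∇V` is `λ/(κ − 1)`-Lipschitz. -/
theorem moreau_envelope_gradient_lipschitz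
    (d : ℕ) (hd : 0 < d)
    (J : EuclideanSpace ℝ (Fin d) → ℝ) (Lhat lam : ℝ)
    (hLhat : 0 ≤ Lhat) (hJ : Differentiable ℝ J)
    (hLip : ∀ x y, ‖gradient J x - gradient J y‖ ≤ Lhat * ‖x - y‖)
    (hlam : Lhat < lam)
    (V : EuclideanSpace ℝ (Fin d) → ℝ)
    (hV : ∀ w, V w = ⨆ θ : EuclideanSpace ℝ (Fin d), (J θ - lam / 2 * ‖θ - w‖ ^ 2)) :
    (∀ w v : EuclideanSpace ℝ (Fin d),
      ‖gradient V w - gradient V v‖ ≤ lam * Lhat / (lam - Lhat) * ‖w - v‖) ∧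
    (∀ κ : ℝ, 1 < κ → κ * Lhat ≤ lam →
      ∀ w v : EuclideanSpace ℝ (Fin d),
        ‖gradient V w - gradient V v‖ ≤ lam / (κ - 1) * ‖w - v‖) :=
  moreau_envelope_gradient_lipschitz_general d J Lhat lam hLhat hJ hLip hlam V hV
end

section
/- Deterministic convergence of MEMRL. Let E = EuclideanSpace ℝ (Fin d), J : E → ℝ differentiable with L̂-Lipschitz gradient (L̂ > 0), 0 ≤ J(θ) ≤ M for all θ, λ > L̂, V(w) = sup_{θ ∈ E} [J(θ) − (λ/2)‖θ − w‖²], L̃ = λL̂/(λ − L̂), and ν ≥ 0. Let T be an integer with T ≥ 4L̃² and T ≥ 1, set α = 1/(2√T), and let (w^t)_{t=0}^{T} be generated by w^{t+1} = (1 − αλ)w^t + αλ θ̃^t where each θ̃^t ∈ E satisfies ‖∇J(θ̃^t) − λ(θ̃^t − w^t)‖ ≤ ν. Then (1/T) Σ_{t=0}^{T−1} ‖∇V(w^t)‖² ≤ 8M/√T + 3λ²ν²/(λ − L̂)². -/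
/-!
Let `θ̂(w)` maximise `θ ↦ J θ - λ/2 ‖θ - w‖²` (it exists by coercivity), so that
`V w = J (θ̂ w) - λ/2 ‖θ̂ w - w‖²`. Evaluating the objective at `w'` in the point `θ̂ w + (w' - w)`
and applying the descent lemma to `J` gives
`V w' ≥ V w + ⟪λ (θ̂ w - w), w' - w⟫ - L̂/2 ‖w' - w‖²`; together with an upper bound of the same
shape (from the Lipschitz dependence of `θ̂` on `w`) this yields `∇V w = λ (θ̂ w - w)`.
As `θ ↦ λ θ - ∇J θ` expands distances by at least `λ - L̂`, the inexact solution `θ̃ᵗ` lies within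
`ν / (λ - L̂)` of `θ̂ wᵗ`, so each MEMRL step is a step of length `α` along `∇V wᵗ` with an error
of norm at most `ε = λ ν / (λ - L̂)`. The lower bound then gives
`α/2 ‖∇V wᵗ‖² - 5α/4 ε² ≤ V wᵗ⁺¹ - V wᵗ` once `L̂ α ≤ 1/4`, and telescoping with `0 ≤ V ≤ M`
bounds the average of `‖∇V wᵗ‖²`.
-/

open RealInnerProductSpace Filter Asymptotics

variable {E : Type*} [NormedAddCommGroup E]

/-- The function whose supremum over `θ` is the Moreau envelope `V w`. -/
noncomputable def moreauObjective (J : E → ℝ) (lam : ℝ) (w θ : E) : ℝ :=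
  J θ - lam / 2 * ‖θ - w‖ ^ 2

theorem exists_forall_moreauObjective_le [ProperSpace E] {J : E → ℝ} {M lam : ℝ}
    (hJ : Continuous J) (hJM : ∀ θ, J θ ≤ M) (hlam : 0 < lam) (w : E) :
    ∃ θ', ∀ θ, moreauObjective J lam w θ ≤ moreauObjective J lam w θ' := by
  refine Continuous.exists_forall_ge (by unfold moreauObjective; fun_prop) ?_
  refine tendsto_atBot_mono (fun θ => sub_le_sub_right (hJM θ) _) ?_
  refine tendsto_atBot_add_const_left _ M (tendsto_neg_atTop_atBot.comp ?_)
  exact ((tendsto_pow_atTop two_ne_zero).comp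
    (by simpa [dist_eq_norm] using tendsto_dist_right_cocompact_atTop w)).const_mul_atTop
    (by positivity)

theorem moreau_mem_Icc {J V : E → ℝ} {θhat : E → E} {M lam : ℝ}
    (hJb : ∀ θ, 0 ≤ J θ ∧ J θ ≤ M) (hlam : 0 ≤ lam)
    (hθhat : ∀ w θ, moreauObjective J lam w θ ≤ moreauObjective J lam w (θhat w))
    (hV : ∀ w, V w = moreauObjective J lam w (θhat w)) (w : E) : V w ∈ Set.Icc 0 M := by
  rw [hV]
  constructor
  · exact (hJb w).1.trans (by simpa [moreauObjective] using hθhat w w)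
  · exact (sub_le_self _ (by positivity)).trans (hJb _).2

variable [InnerProductSpace ℝ E]

theorem moreauObjective_eq_add (J : E → ℝ) (lam : ℝ) (w w' θ : E) :
    moreauObjective J lam w' θ
      = moreauObjective J lam w θ + lam * ⟪θ - w, w' - w⟫ - lam / 2 * ‖w' - w‖ ^ 2 := by
  rw [moreauObjective, moreauObjective, ← sub_sub_sub_cancel_right θ w' w, norm_sub_sq_real]
  ring

theorem half_mul_norm_sq_sub_le_inner_sub {G e : E} {α ε K : ℝ} (he : ‖e‖ ≤ ε) (hα : 0 ≤ α)
    (hKα : K * α ≤ 1 / 8) :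
    α / 2 * ‖G‖ ^ 2 - 5 / 4 * α * ε ^ 2 ≤ ⟪G, α • (G + e)⟫ - K * ‖α • (G + e)‖ ^ 2 := by
  have he2 : ‖e‖ ^ 2 ≤ ε ^ 2 := pow_le_pow_left₀ (norm_nonneg e) he 2
  have hyoung : -(‖G‖ ^ 2 / 4 + ‖e‖ ^ 2) ≤ ⟪G, e⟫ := by
    nlinarith [neg_abs_le ⟪G, e⟫, abs_real_inner_le_norm G e, sq_nonneg (‖G‖ - 2 * ‖e‖)]
  have hsum : ‖G + e‖ ^ 2 ≤ 2 * ‖G‖ ^ 2 + 2 * ‖e‖ ^ 2 := by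
    rw [norm_add_sq_real]
    nlinarith [real_inner_le_norm G e, sq_nonneg (‖G‖ - ‖e‖)]
  have hquad : K * ‖α • (G + e)‖ ^ 2 ≤ α / 8 * ‖G + e‖ ^ 2 := by
    rw [norm_smul, mul_pow, Real.norm_eq_abs, sq_abs]
    nlinarith [mul_le_mul_of_nonneg_right hKα (mul_nonneg hα (sq_nonneg ‖G + e‖))]
  rw [real_inner_smul_right, inner_add_right, real_inner_self_eq_norm_sq]
  nlinarith

theorem average_le_of_ascent {a v : ℕ → ℝ} {α c M : ℝ} {T : ℕ} (hα : 0 < α) (hT : 0 < T)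
    (hstep : ∀ t, α / 2 * a t - 5 / 4 * α * c ≤ v (t + 1) - v t) (hv0 : 0 ≤ v 0)
    (hvT : v T ≤ M) :
    1 / (T : ℝ) * ∑ t ∈ Finset.range T, a t ≤ 2 * M / (α * T) + 5 / 2 * c := by
  have hT' : (0 : ℝ) < T := by exact_mod_cast hT
  have hsum := Finset.sum_le_sum fun t (_ : t ∈ Finset.range T) => hstep t
  rw [Finset.sum_range_sub v, Finset.sum_sub_distrib, ← Finset.mul_sum, Finset.sum_const,
    Finset.card_range, nsmul_eq_mul] at hsum
  calc 1 / (T : ℝ) * ∑ t ∈ Finset.range T, a t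
      = 2 / (α * T) * (α / 2 * ∑ t ∈ Finset.range T, a t) := by field_simp
    _ ≤ 2 / (α * T) * (M + T * (5 / 4 * α * c)) := by gcongr; linarith
    _ = 2 * M / (α * T) + 5 / 2 * c := by field_simp; ring

theorem half_mul_one_div_two_sqrt_le {L lam T : ℝ} (hL : 0 ≤ L) (hlam : L < lam)
    (hT : 4 * (lam * L / (lam - L)) ^ 2 ≤ T) : L / 2 * (1 / (2 * √T)) ≤ 1 / 8 := by
  have hLLtil : L ≤ lam * L / (lam - L) := by
    rw [le_div_iff₀ (sub_pos.2 hlam)]; nlinarith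
  have : 2 * L ≤ √T := Real.le_sqrt_of_sq_le (by nlinarith)
  rw [div_mul_div_comm, mul_one]
  exact div_le_of_le_mul₀ (by positivity) (by norm_num) (by linarith)

variable [CompleteSpace E]

theorem hasGradientAt_of_abs_sub_inner_le {f : E → ℝ} {g x : E} {K : ℝ}
    (h : ∀ y, |f y - f x - ⟪g, y - x⟫| ≤ K * ‖y - x‖ ^ 2) : HasGradientAt f g x := by
  rw [hasGradientAt_iff_isLittleO]
  refine (IsBigO.of_bound K (Eventually.of_forall fun y => ?_)).trans_isLittleO
    (isLittleO_pow_sub_sub x one_lt_two)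
  simpa using h y

theorem quadratic_lower_bound_of_lipschitz_gradient {J : E → ℝ} {L : ℝ}
    (hJ : Differentiable ℝ J) (hLip : ∀ x y, ‖gradient J x - gradient J y‖ ≤ L * ‖x - y‖)
    (x y : E) : J x + ⟪gradient J x, y - x⟫ - L / 2 * ‖y - x‖ ^ 2 ≤ J y := by
  set Δ := y - x
  -- `g` has derivative `⟪∇J(x + tΔ) - ∇J x, Δ⟫ + L t ‖Δ‖² ≥ 0` on `[0, 1]`
  set g : ℝ → ℝ := fun t => J (x + t • Δ) - t * ⟪gradient J x, Δ⟫ + L / 2 * ‖Δ‖ ^ 2 * t ^ 2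
  have hg : ∀ t : ℝ, HasDerivAt g
      (⟪gradient J (x + t • Δ) - gradient J x, Δ⟫ + L * ‖Δ‖ ^ 2 * t) t := by
    intro t
    have hline : HasDerivAt (fun t : ℝ => x + t • Δ) Δ t := by
      simpa using ((hasDerivAt_id t).smul_const Δ).const_add x
    have hJline := (hJ (x + t • Δ)).hasGradientAt.hasFDerivAt.comp_hasDerivAt t hline
    refine ((hJline.sub ((hasDerivAt_id t).mul_const ⟪gradient J x, Δ⟫)).add
      ((hasDerivAt_pow 2 t).const_mul (L / 2 * ‖Δ‖ ^ 2))).congr_deriv ?_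
    rw [InnerProductSpace.toDual_apply_apply, inner_sub_left]
    push_cast
    ring
  have hmono : MonotoneOn g (Set.Icc 0 1) := by
    refine monotoneOn_of_hasDerivWithinAt_nonneg (convex_Icc 0 1)
      (fun t _ => (hg t).continuousAt.continuousWithinAt)
      (fun t _ => (hg t).hasDerivWithinAt) fun t ht => ?_
    rw [interior_Icc] at ht
    have hdist : ‖gradient J (x + t • Δ) - gradient J x‖ ≤ L * (t * ‖Δ‖) := by
      simpa [norm_smul, abs_of_pos ht.1] using hLip (x + t • Δ) x
    have hcs := neg_le_of_abs_le
      (abs_real_inner_le_norm (gradient J (x + t • Δ) - gradient J x) Δ)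
    nlinarith [mul_le_mul_of_nonneg_right hdist (norm_nonneg Δ)]
  have hg0 : g 0 = J x := by simp [g]
  have hg1 : g 1 = J y - ⟪gradient J x, y - x⟫ + L / 2 * ‖y - x‖ ^ 2 := by simp [g, Δ]
  have := hmono ⟨le_rfl, zero_le_one⟩ ⟨zero_le_one, le_rfl⟩ zero_le_one
  rw [hg0, hg1] at this
  linarith

theorem sub_mul_norm_sub_le_of_lipschitz_gradient {J : E → ℝ} {L : ℝ}
    (hLip : ∀ x y, ‖gradient J x - gradient J y‖ ≤ L * ‖x - y‖) (lam : ℝ) (x y : E) :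
    (lam - L) * ‖x - y‖ ≤ ‖lam • (x - y) - (gradient J x - gradient J y)‖ := by
  have hlam : lam * ‖x - y‖ ≤ ‖lam • (x - y)‖ := by
    rw [norm_smul, Real.norm_eq_abs]
    exact mul_le_mul_of_nonneg_right (le_abs_self lam) (norm_nonneg _)
  linarith [norm_sub_norm_le (lam • (x - y)) (gradient J x - gradient J y), hLip x y]

theorem gradient_eq_smul_sub_of_forall_moreauObjective_le {J : E → ℝ}
    {lam : ℝ} {w θ : E} (hJ : DifferentiableAt ℝ J θ)
    (hmax : ∀ θ', moreauObjective J lam w θ' ≤ moreauObjective J lam w θ) :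
    gradient J θ = lam • (θ - w) := by
  have hderiv : HasFDerivAt (moreauObjective J lam w)
      (InnerProductSpace.toDual ℝ E (gradient J θ - lam • (θ - w))) θ := by
    refine (hJ.hasGradientAt.hasFDerivAt.sub
      (((hasFDerivAt_id θ).sub_const w).norm_sq.const_mul (lam / 2))).congr_fderiv ?_
    ext v
    simp
    ring
  have hzero := (IsLocalMax.hasFDerivAt_eq_zero (Eventually.of_forall hmax) hderiv)
  rwa [LinearIsometryEquiv.map_eq_zero_iff, sub_eq_zero] at hzero

section Envelope

variable {J V : E → ℝ} {θhat : E → E} {L lam : ℝ}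

theorem moreau_lower_bound (hJ : Differentiable ℝ J)
    (hLip : ∀ x y, ‖gradient J x - gradient J y‖ ≤ L * ‖x - y‖)
    (hθhat : ∀ w θ, moreauObjective J lam w θ ≤ moreauObjective J lam w (θhat w))
    (hV : ∀ w, V w = moreauObjective J lam w (θhat w)) (w w' : E) :
    V w + ⟪lam • (θhat w - w), w' - w⟫ - L / 2 * ‖w' - w‖ ^ 2 ≤ V w' := by
  set θ := θhat w
  have hfoc := gradient_eq_smul_sub_of_forall_moreauObjective_le (hJ θ) (hθhat w)
  calc V w + ⟪lam • (θ - w), w' - w⟫ - L / 2 * ‖w' - w‖ ^ 2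
      = J θ + ⟪gradient J θ, θ + (w' - w) - θ⟫ - L / 2 * ‖θ + (w' - w) - θ‖ ^ 2
          - lam / 2 * ‖θ - w‖ ^ 2 := by
        rw [hV, moreauObjective, hfoc, add_sub_cancel_left]; ring
    _ ≤ J (θ + (w' - w)) - lam / 2 * ‖θ - w‖ ^ 2 :=
        sub_le_sub_right (quadratic_lower_bound_of_lipschitz_gradient hJ hLip _ _) _
    _ = moreauObjective J lam w' (θ + (w' - w)) := by
        rw [moreauObjective, show θ + (w' - w) - w' = θ - w by abel]
    _ ≤ V w' := (hθhat w' _).trans_eq (hV w').symm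

theorem moreau_upper_bound (hJ : Differentiable ℝ J)
    (hLip : ∀ x y, ‖gradient J x - gradient J y‖ ≤ L * ‖x - y‖) (hL : 0 ≤ L) (hlam : L < lam)
    (hθhat : ∀ w θ, moreauObjective J lam w θ ≤ moreauObjective J lam w (θhat w))
    (hV : ∀ w, V w = moreauObjective J lam w (θhat w)) (w w' : E) :
    V w' ≤ V w + ⟪lam • (θhat w - w), w' - w⟫ + lam ^ 2 / (lam - L) * ‖w' - w‖ ^ 2 := by
  set θ := θhat w
  set θ' := θhat w'
  have hμ : 0 < lam - L := sub_pos.2 hlam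
  have hfoc := gradient_eq_smul_sub_of_forall_moreauObjective_le (hJ θ) (hθhat w)
  have hfoc' := gradient_eq_smul_sub_of_forall_moreauObjective_le (hJ θ') (hθhat w')
  have hclose : (lam - L) * ‖θ' - θ‖ ≤ lam * ‖w' - w‖ := by
    have := sub_mul_norm_sub_le_of_lipschitz_gradient hLip lam θ' θ
    rwa [hfoc, hfoc', show lam • (θ' - θ) - (lam • (θ' - w') - lam • (θ - w)) = lam • (w' - w)
      by module, norm_smul, Real.norm_of_nonneg (hL.trans hlam.le)] at this
  have hinner : lam * ⟪θ' - θ, w' - w⟫ ≤ lam ^ 2 / (lam - L) * ‖w' - w‖ ^ 2 := by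
    rw [div_mul_eq_mul_div, le_div_iff₀ hμ]
    have hlam0 : 0 ≤ lam := hL.trans hlam.le
    nlinarith [mul_le_mul_of_nonneg_left (real_inner_le_norm (θ' - θ) (w' - w))
      (mul_nonneg hlam0 hμ.le), mul_le_mul_of_nonneg_left hclose
      (mul_nonneg hlam0 (norm_nonneg (w' - w)))]
  calc V w' = moreauObjective J lam w θ' + lam * ⟪θ' - w, w' - w⟫ - lam / 2 * ‖w' - w‖ ^ 2 := by
        rw [hV, moreauObjective_eq_add _ _ w]
    _ ≤ V w + lam * ⟪θ - w, w' - w⟫ + lam * ⟪θ' - θ, w' - w⟫ := by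
        rw [hV w, ← sub_add_sub_cancel θ' θ w, inner_add_left]
        nlinarith [hθhat w θ', sq_nonneg ‖w' - w‖, hL.trans hlam.le]
    _ ≤ _ := by rw [real_inner_smul_left]; linarith

theorem moreau_hasGradientAt (hJ : Differentiable ℝ J)
    (hLip : ∀ x y, ‖gradient J x - gradient J y‖ ≤ L * ‖x - y‖) (hL : 0 ≤ L) (hlam : L < lam)
    (hθhat : ∀ w θ, moreauObjective J lam w θ ≤ moreauObjective J lam w (θhat w))
    (hV : ∀ w, V w = moreauObjective J lam w (θhat w)) (w : E) :
    HasGradientAt V (lam • (θhat w - w)) w := by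
  refine hasGradientAt_of_abs_sub_inner_le (K := L / 2 + lam ^ 2 / (lam - L)) fun w' => ?_
  have hlower := moreau_lower_bound hJ hLip hθhat hV w w'
  have hupper := moreau_upper_bound hJ hLip hL hlam hθhat hV w w'
  have hquad : 0 ≤ ‖w' - w‖ ^ 2 := sq_nonneg _
  have hK : 0 ≤ lam ^ 2 / (lam - L) := div_nonneg (sq_nonneg _) (sub_pos.2 hlam).le
  rw [abs_le]
  constructor <;> nlinarith

theorem moreau_inexact_ascent_step (hJ : Differentiable ℝ J)
    (hLip : ∀ x y, ‖gradient J x - gradient J y‖ ≤ L * ‖x - y‖) (hL : 0 ≤ L) (hlam : L < lam)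
    (hθhat : ∀ w θ, moreauObjective J lam w θ ≤ moreauObjective J lam w (θhat w))
    (hV : ∀ w, V w = moreauObjective J lam w (θhat w)) {w θ : E} {α ν : ℝ} (hα : 0 ≤ α)
    (hαL : L / 2 * α ≤ 1 / 8) (hres : ‖gradient J θ - lam • (θ - w)‖ ≤ ν) :
    α / 2 * ‖lam • (θhat w - w)‖ ^ 2 - 5 / 4 * α * (lam * ν / (lam - L)) ^ 2
      ≤ V ((1 - α * lam) • w + (α * lam) • θ) - V w := by
  have hμ : 0 < lam - L := sub_pos.2 hlam
  have hfoc := gradient_eq_smul_sub_of_forall_moreauObjective_le (hJ (θhat w)) (hθhat w)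
  have hnear : (lam - L) * ‖θ - θhat w‖ ≤ ν := by
    have := sub_mul_norm_sub_le_of_lipschitz_gradient hLip lam θ (θhat w)
    rw [hfoc, show lam • (θ - θhat w) - (gradient J θ - lam • (θhat w - w))
      = -(gradient J θ - lam • (θ - w)) by module, norm_neg] at this
    exact this.trans hres
  have herr : ‖lam • (θ - θhat w)‖ ≤ lam * ν / (lam - L) := by
    rw [norm_smul, Real.norm_of_nonneg (hL.trans hlam.le), mul_div_assoc]
    exact mul_le_mul_of_nonneg_left (by rwa [le_div_iff₀ hμ, mul_comm]) (hL.trans hlam.le)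
  have hlower := moreau_lower_bound hJ hLip hθhat hV w ((1 - α * lam) • w + (α * lam) • θ)
  -- the inexact step is the exact step `α ∇V w` plus the error `α λ (θ - θ̂ w)`
  rw [show (1 - α * lam) • w + (α * lam) • θ - w
    = α • (lam • (θhat w - w) + lam • (θ - θhat w)) by module] at hlower
  linarith [half_mul_norm_sq_sub_le_inner_sub (G := lam • (θhat w - w)) herr hα hαL]

end Envelope

theorem memrl_deterministic_convergence_general
    (d : ℕ)
    (J : EuclideanSpace ℝ (Fin d) → ℝ) (Lhat M lam ν : ℝ)
    (hLhat : 0 < Lhat) (hJ : Differentiable ℝ J)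
    (hLip : ∀ x y, ‖gradient J x - gradient J y‖ ≤ Lhat * ‖x - y‖)
    (hJb : ∀ θ : EuclideanSpace ℝ (Fin d), 0 ≤ J θ ∧ J θ ≤ M)
    (hlam : Lhat < lam)
    (V : EuclideanSpace ℝ (Fin d) → ℝ)
    (hV : ∀ w, V w = ⨆ θ : EuclideanSpace ℝ (Fin d), (J θ - lam / 2 * ‖θ - w‖ ^ 2))
    (Ltil : ℝ) (hLtil : Ltil = lam * Lhat / (lam - Lhat))
    (T : ℕ) (hT4 : 4 * Ltil ^ 2 ≤ (T : ℝ)) (hT1 : 1 ≤ T)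
    (α : ℝ) (hα : α = 1 / (2 * Real.sqrt T))
    (w θtil : ℕ → EuclideanSpace ℝ (Fin d))
    (hupd : ∀ t : ℕ, w (t + 1) = (1 - α * lam) • w t + (α * lam) • θtil t)
    (hθ : ∀ t : ℕ, ‖gradient J (θtil t) - lam • (θtil t - w t)‖ ≤ ν) :
    (1 / (T : ℝ)) * ∑ t ∈ Finset.range T, ‖gradient V (w t)‖ ^ 2
      ≤ 8 * M / Real.sqrt T + 3 * lam ^ 2 * ν ^ 2 / (lam - Lhat) ^ 2 := by
  have hlam0 : 0 < lam := hLhat.trans hlam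
  choose θhat hθhat using
    exists_forall_moreauObjective_le hJ.continuous (fun θ => (hJb θ).2) hlam0
  have hVeq : ∀ w, V w = moreauObjective J lam w (θhat w) := fun w =>
    (hV w).trans (ciSup_eq_of_forall_le_of_forall_lt_exists_gt (hθhat w) fun _ h => ⟨θhat w, h⟩)
  have hgrad : ∀ w, gradient V w = lam • (θhat w - w) := fun w =>
    (moreau_hasGradientAt hJ hLip hLhat.le hlam hθhat hVeq w).gradient
  have hα0 : 0 < α := by rw [hα]; positivity
  have hαL : Lhat / 2 * α ≤ 1 / 8 := by
    rw [hα]; exact half_mul_one_div_two_sqrt_le hLhat.le hlam (hLtil ▸ hT4)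
  have hstep : ∀ t, α / 2 * ‖gradient V (w t)‖ ^ 2 - 5 / 4 * α * (lam * ν / (lam - Lhat)) ^ 2
      ≤ V (w (t + 1)) - V (w t) := fun t => by
    rw [hgrad, hupd]
    exact moreau_inexact_ascent_step hJ hLip hLhat.le hlam hθhat hVeq hα0.le hαL (hθ t)
  have hVbounds := moreau_mem_Icc hJb hlam0.le hθhat hVeq
  have hM : 0 ≤ M := (hVbounds 0).1.trans (hVbounds 0).2
  calc _ ≤ 2 * M / (α * T) + 5 / 2 * (lam * ν / (lam - Lhat)) ^ 2 :=
        average_le_of_ascent (v := fun t => V (w t)) hα0 hT1 hstep (hVbounds _).1 (hVbounds _).2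
    _ = 4 * M / √(T : ℝ) + 5 / 2 * (lam ^ 2 * ν ^ 2 / (lam - Lhat) ^ 2) := by
        rw [hα, div_pow, mul_pow]
        congr 1
        field_simp
        rw [Real.sq_sqrt (Nat.cast_nonneg T)]
        ring
    _ ≤ _ := by
        have : 0 ≤ lam ^ 2 * ν ^ 2 / (lam - Lhat) ^ 2 := by positivity
        have : 4 * M / √(T : ℝ) ≤ 8 * M / √(T : ℝ) := by gcongr; norm_num
        have : 3 * lam ^ 2 * ν ^ 2 / (lam - Lhat) ^ 2
            = 3 * (lam ^ 2 * ν ^ 2 / (lam - Lhat) ^ 2) := by ring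
        linarith

/-- Deterministic convergence of MEMRL: with `α = 1/(2√T)`, `T ≥ 4L̃²`,
and `ν`-accurate inner solutions, the average squared gradient norm of the
Moreau envelope satisfies
`(1/T) Σ_{t<T} ‖∇V(w^t)‖² ≤ 8M/√T + 3λ²ν²/(λ − L̂)²`. -/
theorem memrl_deterministic_convergence
    (d : ℕ) (hd : 0 < d)
    (J : EuclideanSpace ℝ (Fin d) → ℝ) (Lhat M lam ν : ℝ)
    (hLhat : 0 < Lhat) (hJ : Differentiable ℝ J)
    (hLip : ∀ x y, ‖gradient J x - gradient J y‖ ≤ Lhat * ‖x - y‖)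
    (hJb : ∀ θ : EuclideanSpace ℝ (Fin d), 0 ≤ J θ ∧ J θ ≤ M)
    (hlam : Lhat < lam) (hν : 0 ≤ ν)
    (V : EuclideanSpace ℝ (Fin d) → ℝ)
    (hV : ∀ w, V w = ⨆ θ : EuclideanSpace ℝ (Fin d), (J θ - lam / 2 * ‖θ - w‖ ^ 2))
    (Ltil : ℝ) (hLtil : Ltil = lam * Lhat / (lam - Lhat))
    (T : ℕ) (hT4 : 4 * Ltil ^ 2 ≤ (T : ℝ)) (hT1 : 1 ≤ T)
    (α : ℝ) (hα : α = 1 / (2 * Real.sqrt T))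
    (w θtil : ℕ → EuclideanSpace ℝ (Fin d))
    (hupd : ∀ t : ℕ, w (t + 1) = (1 - α * lam) • w t + (α * lam) • θtil t)
    (hθ : ∀ t : ℕ, ‖gradient J (θtil t) - lam • (θtil t - w t)‖ ≤ ν) :
    (1 / (T : ℝ)) * ∑ t ∈ Finset.range T, ‖gradient V (w t)‖ ^ 2
      ≤ 8 * M / Real.sqrt T + 3 * lam ^ 2 * ν ^ 2 / (lam - Lhat) ^ 2 :=
  memrl_deterministic_convergence_general d J Lhat M lam ν hLhat hJ hLip hJb hlam V hV Ltil hLtil T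
    hT4 hT1 α hα w θtil hupd hθ
end
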